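/- arXiv:1912.13325 — 5 statements merged into one kernel-verified Lean document; each statement's English description precedes it below -/
import Mathlib

section
/- Assume (r1,r2,r3,r4,i,j,N) is admissible and i + j ≥ r1 + r3 and i + j ≥ r2 + r4 (so m_min = 0). Then F_1^N(r1,r2,i; r3,r4,j) = (−1)^ρ · K_1 · Σ_{n=0}^{m_max} qⁿ · (q^{a1};q)_n (q^{a2};q)_n (q^{a3};q)_n (q^{a4};q)_n / ( (q;q)_n · (q^{b1};q)_n (q^{b2};q)_n (q^{b3};q)_n ), where a1 = (i − r1 − r2)/2, a2 = (i − r3 − r4)/2, a3 = (j − r1 − r4)/2, a4 = (j − r2 − r3)/2, b1 = −ρ − (N−1), b2 = (i + j − r2 − r4)/2 + 1, b3 = (i + j − r1 − r3)/2 + (N−1) (all integers, and a1 + a2 + a3 + a4 + 1 = b1 + b2 + b3). All Pochhammer factors in the denominators are nonzero for 0 ≤ n ≤ m_max. This is the terminating balanced ₄Φ₃ representation of the type I multiplicity-free 6-j symbol (Statement 3 of the paper, made precise up to the overall sign (−1)^ρ which the paper leaves implicit). -/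
open Finset

/-- The quantum integer `[n] = (tⁿ − t⁻ⁿ)/(t − t⁻¹)`. -/
noncomputable def qint (t : ℝ) (n : ℤ) : ℝ := (t ^ n - t ^ (-n)) / (t - t⁻¹)

/-- The quantum factorial `[n]! = [1][2]⋯[n]`, with `[0]! = 1`
(and value `1` for negative arguments, which never occur below). -/
noncomputable def qfact (t : ℝ) (n : ℤ) : ℝ :=
  ∏ k ∈ Finset.range n.toNat, qint t ((k : ℤ) + 1)

/-- The q-Pochhammer symbol `(x; q)_n = ∏_{s=0}^{n−1} (1 − x qˢ)`. -/
noncomputable def qpoch (x q : ℝ) (n : ℕ) : ℝ :=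
  ∏ s ∈ Finset.range n, (1 - x * q ^ s)

/-- Admissibility of the tuple `(r₁,r₂,r₃,r₄,i,j,N)`. -/
def Admissible (r₁ r₂ r₃ r₄ i j N : ℤ) : Prop :=
  0 ≤ r₁ ∧ 0 ≤ r₂ ∧ 0 ≤ r₃ ∧ 0 ≤ r₄ ∧ 0 ≤ i ∧ 0 ≤ j ∧ 2 ≤ N ∧
  2 ∣ (r₁ + r₂ + i) ∧ 2 ∣ (r₃ + r₄ + i) ∧ 2 ∣ (r₁ + r₄ + j) ∧ 2 ∣ (r₂ + r₃ + j) ∧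
  max |r₁ - r₂| |r₃ - r₄| ≤ i ∧ i ≤ min (r₁ + r₂) (r₃ + r₄) ∧
  max |r₂ - r₃| |r₁ - r₄| ≤ j ∧ j ≤ min (r₂ + r₃) (r₁ + r₄)

/-- `ρ = (r₁+r₂+r₃+r₄)/2`. -/
def rho (r₁ r₂ r₃ r₄ : ℤ) : ℤ := (r₁ + r₂ + r₃ + r₄) / 2

/-- `m_max = (1/2)·min(r₁+r₂−i, r₃+r₄−i, r₁+r₄−j, r₂+r₃−j)`. -/
def mMax (r₁ r₂ r₃ r₄ i j : ℤ) : ℤ :=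
  (min (min (r₁ + r₂ - i) (r₃ + r₄ - i)) (min (r₁ + r₄ - j) (r₂ + r₃ - j))) / 2

/-- `m_min = (1/2)·max(0, r₁+r₃−i−j, r₂+r₄−i−j)`. -/
def mMin (r₁ r₂ r₃ r₄ i j : ℤ) : ℤ :=
  (max 0 (max (r₁ + r₃ - i - j) (r₂ + r₄ - i - j))) / 2

/-- `θ_N(a,b,c)`. -/
noncomputable def theta (t : ℝ) (N a b c : ℤ) : ℝ :=
  Real.sqrt (qfact t ((a + b - c) / 2) * qfact t ((a - b + c) / 2) *
    qfact t ((-a + b + c) / 2) / qfact t ((a + b + c) / 2 + N - 1))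

/-- `K′ = θ_N(r₁,r₂,i)·θ_N(r₃,r₄,i)·θ_N(r₁,r₄,j)·θ_N(r₂,r₃,j)·[N−1]!·[N−2]!`. -/
noncomputable def Kprime (t : ℝ) (N r₁ r₂ r₃ r₄ i j : ℤ) : ℝ :=
  theta t N r₁ r₂ i * theta t N r₃ r₄ i * theta t N r₁ r₄ j * theta t N r₂ r₃ j *
    qfact t (N - 1) * qfact t (N - 2)

/-- The multiplicity-free 6-j expression `F_T^N(r₁,r₂,i; r₃,r₄,j)` of type `T ∈ {1,2}`. -/
noncomputable def F (t : ℝ) (T : ℕ) (N r₁ r₂ i r₃ r₄ j : ℤ) : ℝ :=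
  Kprime t N r₁ r₂ r₃ r₄ i j *
    ∑ m ∈ Finset.Icc (mMin r₁ r₂ r₃ r₄ i j) (mMax r₁ r₂ r₃ r₄ i j),
      (-1 : ℝ) ^ (rho r₁ r₂ r₃ r₄ - m) * qfact t (rho r₁ r₂ r₃ r₄ + N - 1 - m) /
        (qfact t m * qfact t ((r₃ + r₄ - i) / 2 - m) * qfact t ((r₂ + r₃ - j) / 2 - m) *
          qfact t ((r₁ + r₄ - j) / 2 - m) * qfact t ((i + j - r₂ - r₄) / 2 + m) *
          qfact t ((r₁ + r₂ - i) / 2 + (N - 2) * (if T = 2 then 1 else 0) - m) *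
          qfact t ((i + j - r₁ - r₃) / 2 + (N - 2) * (if T = 1 then 1 else 0) + m))

/-- The prefactor `K_T` (for the case `m_min = 0`). -/
noncomputable def Kfac (t : ℝ) (T : ℕ) (N r₁ r₂ i r₃ r₄ j : ℤ) : ℝ :=
  Kprime t N r₁ r₂ r₃ r₄ i j * qfact t (rho r₁ r₂ r₃ r₄ + N - 1) /
    (qfact t ((r₃ + r₄ - i) / 2) *
      qfact t ((r₁ + r₂ - i) / 2 + (N - 2) * (if T = 2 then 1 else 0)) *
      qfact t ((r₂ + r₃ - j) / 2) * qfact t ((r₁ + r₄ - j) / 2) *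
      qfact t ((i + j - r₂ - r₄) / 2) *
      qfact t ((i + j - r₁ - r₃) / 2 + (N - 2) * (if T = 1 then 1 else 0)))

/-!
With `q = t²` every quantum integer satisfies `1 - qⁿ = (t⁻¹ - t) tⁿ [n]`, so a q-Pochhammer
symbol `(qᵃ; q)ₘ` is `(t⁻¹ - t)ᵐ` times a product of powers of `t` times `[a][a+1]⋯[a+m-1]`.
Hence `(q^{-X}; q)ₘ` and `(q^{Y+1}; q)ₘ` are, up to such factors, the ratios `[X]!/[X-m]!` and
`[Y+m]!/[Y]!`. Substituting this into the `m`-th term of the `₄Φ₃` series, the powers of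
`t - t⁻¹` cancel up to the sign `(-1)ᵐ`, and the balance condition
`a₁ + a₂ + a₃ + a₄ + 1 = b₁ + b₂ + b₃` is exactly what makes the powers of `t` cancel against
`qᵐ`. What remains is the `m`-th summand of `F` divided by `K₁`.
-/

lemma sum_Icc_zero_eq_sum_range {M : Type*} [AddCommMonoid M] {n : ℤ} (hn : 0 ≤ n) (f : ℤ → M) :
    ∑ m ∈ Icc 0 n, f m = ∑ k ∈ range (n.toNat + 1), f k := by
  rw [Int.Icc_eq_finset_map, sum_map, show (n + 1 - 0).toNat = n.toNat + 1 by omega]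
  simp

lemma neg_one_zpow_sub_natCast {α : Type*} [DivisionRing α] (r : ℤ) (n : ℕ) :
    (-1 : α) ^ (r - n) = (-1) ^ r * (-1) ^ n := by
  rw [zpow_sub₀ (neg_ne_zero.2 one_ne_zero), zpow_natCast, div_eq_mul_inv, ← inv_pow, inv_neg,
    inv_one]

section QuantumFactorials

variable {t : ℝ}

lemma qint_neg (n : ℤ) : qint t (-n) = -qint t n := by
  rw [qint, qint, neg_neg, ← neg_sub, neg_div]

lemma qint_pos (ht : 0 < t) (ht1 : t ≠ 1) {n : ℤ} (hn : 0 < n) : 0 < qint t n := by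
  rcases ht1.lt_or_gt with h | h
  · refine div_pos_of_neg_of_neg ?_ ?_
    · exact sub_neg.2 (zpow_lt_zpow_right_of_lt_one₀ ht h (by omega))
    · exact sub_neg.2 (h.trans ((one_lt_inv₀ ht).2 h))
  · refine div_pos ?_ ?_
    · exact sub_pos.2 (zpow_lt_zpow_right₀ h (by omega))
    · exact sub_pos.2 ((inv_lt_one_of_one_lt₀ h).trans h)

lemma qint_ne_zero (ht : 0 < t) (ht1 : t ≠ 1) {n : ℤ} (hn : n ≠ 0) : qint t n ≠ 0 := by
  rcases hn.lt_or_gt with h | h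
  · rw [← neg_neg n, qint_neg, neg_ne_zero]
    exact (qint_pos ht ht1 (neg_pos.2 h)).ne'
  · exact (qint_pos ht ht1 h).ne'

lemma qfact_pos (ht : 0 < t) (ht1 : t ≠ 1) (n : ℤ) : 0 < qfact t n :=
  prod_pos fun k _ => qint_pos ht ht1 (by omega)

lemma qfact_add {Y : ℤ} (hY : 0 ≤ Y) (m : ℕ) :
    qfact t (Y + m) = qfact t Y * ∏ k ∈ range m, qint t (Y + k + 1) := by
  lift Y to ℕ using hY
  rw [qfact, qfact, ← Nat.cast_add, Int.toNat_natCast, Int.toNat_natCast, prod_range_add]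
  push_cast
  rfl

lemma qfact_eq_qfact_sub_mul {X : ℤ} {m : ℕ} (hX : (m : ℤ) ≤ X) :
    qfact t X = qfact t (X - m) * ∏ k ∈ range m, qint t (X - k) := by
  conv_lhs => rw [← sub_add_cancel X m, qfact_add (sub_nonneg.2 hX), ← prod_range_reflect]
  refine congrArg _ (prod_congr rfl fun k hk => congrArg _ ?_)
  have := mem_range.1 hk
  omega

lemma sub_inv_ne_zero (ht : 0 < t) (ht1 : t ≠ 1) : t - t⁻¹ ≠ 0 := by
  intro h
  have htt : t * t = 1 := by simpa [← sub_eq_zero.1 h] using mul_inv_cancel₀ ht.ne'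
  exact ht1 ((mul_self_eq_one_iff.1 htt).resolve_right (by linarith))

lemma one_sub_sq_zpow (ht : t ≠ 0) (n : ℤ) :
    1 - (t ^ 2) ^ n = (t⁻¹ - t) * t ^ n * qint t n := by
  by_cases hs : t - t⁻¹ = 0
  · have hsq : t ^ 2 = 1 := by
      rw [sq, ← mul_inv_cancel₀ ht, ← sub_eq_zero.1 hs]
    rw [hsq, one_zpow, sub_self, ← neg_sub, hs, neg_zero, zero_mul, zero_mul]
  · rw [qint, sq, mul_zpow, zpow_neg, eq_comm, mul_div_assoc', div_eq_iff hs]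
    field_simp
    ring

lemma qpoch_sq_zpow (ht : t ≠ 0) (a : ℤ) (m : ℕ) :
    qpoch ((t ^ 2) ^ a) (t ^ 2) m =
      (t⁻¹ - t) ^ m * (∏ k ∈ range m, t ^ (a + k)) * ∏ k ∈ range m, qint t (a + k) := by
  have hfac (k : ℕ) : 1 - (t ^ 2) ^ a * (t ^ 2) ^ k = (t⁻¹ - t) * t ^ (a + k) * qint t (a + k) := by
    rw [← zpow_natCast (t ^ 2) k, ← zpow_add₀ (pow_ne_zero 2 ht), one_sub_sq_zpow ht]
  simp only [qpoch, hfac, prod_mul_distrib, prod_const, card_range]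

lemma qpoch_sq_zpow_ne_zero (ht : 0 < t) (ht1 : t ≠ 1) {a : ℤ} {m : ℕ}
    (ha : ∀ k < m, a + k ≠ 0) : qpoch ((t ^ 2) ^ a) (t ^ 2) m ≠ 0 := by
  have hs : t⁻¹ - t ≠ 0 := by
    rw [← neg_sub]
    exact neg_ne_zero.2 (sub_inv_ne_zero ht ht1)
  rw [qpoch_sq_zpow ht.ne']
  refine mul_ne_zero (mul_ne_zero (pow_ne_zero _ hs) ?_) ?_
  · exact prod_ne_zero_iff.2 fun k _ => zpow_ne_zero _ ht.ne'
  · exact prod_ne_zero_iff.2 fun k hk => qint_ne_zero ht ht1 (ha k (mem_range.1 hk))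

lemma qpoch_sq_zpow_succ_mul_qfact (ht : t ≠ 0) {Y : ℤ} (hY : 0 ≤ Y) (m : ℕ) :
    qpoch ((t ^ 2) ^ (Y + 1)) (t ^ 2) m * qfact t Y =
      (t⁻¹ - t) ^ m * (∏ k ∈ range m, t ^ (Y + 1 + k)) * qfact t (Y + m) := by
  rw [qpoch_sq_zpow ht, qfact_add hY]
  simp only [add_right_comm Y 1]
  ring

lemma qpoch_sq_zpow_neg_mul_qfact (ht : t ≠ 0) {X : ℤ} {m : ℕ} (hX : (m : ℤ) ≤ X) :
    qpoch ((t ^ 2) ^ (-X)) (t ^ 2) m * qfact t (X - m) =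
      (t - t⁻¹) ^ m * (∏ k ∈ range m, t ^ (-X + k)) * qfact t X := by
  have hrev : ∏ k ∈ range m, qint t (-X + k) = (-1) ^ m * ∏ k ∈ range m, qint t (X - k) := by
    simp only [show ∀ k : ℕ, -X + k = -(X - k) by intro k; ring, qint_neg, prod_neg, card_range]
  have hsign : (t⁻¹ - t) ^ m * (-1) ^ m = (t - t⁻¹) ^ m := by rw [← mul_pow, mul_neg_one, neg_sub]
  rw [qpoch_sq_zpow ht, hrev, qfact_eq_qfact_sub_mul hX, ← hsign]
  ring

lemma prod_zpow_balanced (ht : t ≠ 0) {a b c d e g P : ℤ} (hP : a + b + c + d + e + g + 1 = P)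
    (m : ℕ) :
    (∏ k ∈ range m, t ^ (-a + k)) * (∏ k ∈ range m, t ^ (-b + k)) *
        (∏ k ∈ range m, t ^ (-c + k)) * (∏ k ∈ range m, t ^ (-d + k)) * (t ^ 2) ^ m =
      (∏ k ∈ range m, t ^ (1 + (k : ℤ))) * (∏ k ∈ range m, t ^ (-P + k)) *
        (∏ k ∈ range m, t ^ (e + 1 + k)) * (∏ k ∈ range m, t ^ (g + 1 + k)) := by
  rw [← card_range m, ← prod_const, card_range]
  simp only [← prod_mul_distrib]
  refine prod_congr rfl fun k _ => ?_
  rw [← zpow_natCast t 2]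
  simp only [← zpow_add₀ ht]
  congr 1
  omega

lemma neg_one_pow_mul_qfact_div_eq_qpoch (ht : 0 < t) (ht1 : t ≠ 1) {a b c d e g P : ℤ} {m : ℕ}
    (ha : (m : ℤ) ≤ a) (hb : (m : ℤ) ≤ b) (hc : (m : ℤ) ≤ c) (hd : (m : ℤ) ≤ d)
    (he : 0 ≤ e) (hg : 0 ≤ g) (hP : a + b + c + d + e + g + 1 = P) :
    (-1) ^ m * qfact t (P - m) /
        (qfact t m * qfact t (b - m) * qfact t (d - m) * qfact t (c - m) * qfact t (e + m) *
          qfact t (a - m) * qfact t (g + m)) =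
      qfact t P / (qfact t b * qfact t a * qfact t d * qfact t c * qfact t e * qfact t g) *
        ((t ^ 2) ^ m *
            (qpoch ((t ^ 2) ^ (-a)) (t ^ 2) m * qpoch ((t ^ 2) ^ (-b)) (t ^ 2) m *
              qpoch ((t ^ 2) ^ (-c)) (t ^ 2) m * qpoch ((t ^ 2) ^ (-d)) (t ^ 2) m) /
          (qpoch (t ^ 2) (t ^ 2) m * qpoch ((t ^ 2) ^ (-P)) (t ^ 2) m *
            qpoch ((t ^ 2) ^ (e + 1)) (t ^ 2) m * qpoch ((t ^ 2) ^ (g + 1)) (t ^ 2) m)) := by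
  have ht0 := ht.ne'
  have hf (n : ℤ) := (qfact_pos ht ht1 n).ne'
  have hQ (X : ℤ) (hX : (m : ℤ) ≤ X) := eq_div_of_mul_eq (hf _) (qpoch_sq_zpow_neg_mul_qfact ht0 hX)
  have hR (Y : ℤ) (hY : 0 ≤ Y) := eq_div_of_mul_eq (hf _) (qpoch_sq_zpow_succ_mul_qfact ht0 hY m)
  have h1 := hR 0 le_rfl
  have hq0 : qfact t 0 = 1 := prod_range_zero _
  simp only [zero_add, zpow_one, hq0, div_one] at h1
  have hbal := prod_zpow_balanced ht0 hP m
  rw [hQ a ha, hQ b hb, hQ c hc, hQ d hd, hQ P (by omega), hR e he, hR g hg, h1, ← neg_sub t]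
  have hT (x : ℤ) : ∏ k ∈ range m, t ^ (x + k) ≠ 0 := prod_ne_zero_iff.2 fun k _ => zpow_ne_zero _ ht0
  have hs := sub_inv_ne_zero ht ht1
  have hsq : ((-1 : ℝ) ^ m) ^ 2 = 1 := by rw [← pow_mul, pow_mul', neg_one_sq, one_pow]
  generalize t - t⁻¹ = u at hs ⊢
  have hu : -u ≠ 0 := neg_ne_zero.2 hs
  field_simp [hf, hT]
  rw [neg_pow u]
  linear_combination (u ^ m) ^ 3 * (((-1) ^ m) ^ 2 + 1) * (∏ k ∈ range m, t ^ (1 + (k : ℤ))) *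
    (∏ k ∈ range m, t ^ (-P + k)) * (∏ k ∈ range m, t ^ (e + 1 + k)) *
    (∏ k ∈ range m, t ^ (g + 1 + k)) * hsq - (u ^ m) ^ 3 * hbal

end QuantumFactorials

/-- the terminating balanced `₄Φ₃` representation of the type I
multiplicity-free 6-j symbol (with `m_min = 0`), including the balance relation on the
arguments and the nonvanishing of the denominator Pochhammer factors. -/
theorem stmt4 (t : ℝ) (ht : 0 < t) (ht1 : t ≠ 1) (r₁ r₂ r₃ r₄ i j N : ℤ)
    (hadm : Admissible r₁ r₂ r₃ r₄ i j N)
    (hij1 : r₁ + r₃ ≤ i + j) (hij2 : r₂ + r₄ ≤ i + j) :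
    (((i - r₁ - r₂) / 2) + ((i - r₃ - r₄) / 2) + ((j - r₁ - r₄) / 2) + ((j - r₂ - r₃) / 2) + 1 =
      (-(rho r₁ r₂ r₃ r₄) - (N - 1)) + ((i + j - r₂ - r₄) / 2 + 1) +
        ((i + j - r₁ - r₃) / 2 + (N - 1))) ∧
    (∀ n : ℕ, (n : ℤ) ≤ mMax r₁ r₂ r₃ r₄ i j →
      qpoch (t ^ 2) (t ^ 2) n ≠ 0 ∧
      qpoch ((t ^ 2) ^ (-(rho r₁ r₂ r₃ r₄) - (N - 1))) (t ^ 2) n ≠ 0 ∧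
      qpoch ((t ^ 2) ^ ((i + j - r₂ - r₄) / 2 + 1)) (t ^ 2) n ≠ 0 ∧
      qpoch ((t ^ 2) ^ ((i + j - r₁ - r₃) / 2 + (N - 1))) (t ^ 2) n ≠ 0) ∧
    F t 1 N r₁ r₂ i r₃ r₄ j =
      (-1 : ℝ) ^ (rho r₁ r₂ r₃ r₄) * Kfac t 1 N r₁ r₂ i r₃ r₄ j *
        ∑ n ∈ Finset.range ((mMax r₁ r₂ r₃ r₄ i j).toNat + 1),
          (t ^ 2) ^ n *
            (qpoch ((t ^ 2) ^ ((i - r₁ - r₂) / 2)) (t ^ 2) n *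
              qpoch ((t ^ 2) ^ ((i - r₃ - r₄) / 2)) (t ^ 2) n *
              qpoch ((t ^ 2) ^ ((j - r₁ - r₄) / 2)) (t ^ 2) n *
              qpoch ((t ^ 2) ^ ((j - r₂ - r₃) / 2)) (t ^ 2) n) /
            (qpoch (t ^ 2) (t ^ 2) n *
              qpoch ((t ^ 2) ^ (-(rho r₁ r₂ r₃ r₄) - (N - 1))) (t ^ 2) n *
              qpoch ((t ^ 2) ^ ((i + j - r₂ - r₄) / 2 + 1)) (t ^ 2) n *
              qpoch ((t ^ 2) ^ ((i + j - r₁ - r₃) / 2 + (N - 1))) (t ^ 2) n) := by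
  obtain ⟨hr₁, hr₂, hr₃, hr₄, hi, hj, hN, d12, d34, d14, d23, hi₁, hi₂, hj₁, hj₂⟩ := hadm
  have hρ : 2 * rho r₁ r₂ r₃ r₄ = r₁ + r₂ + r₃ + r₄ := by unfold rho; omega
  refine ⟨by omega, fun n hn => ?_, ?_⟩
  · unfold mMax at hn
    refine ⟨?_, qpoch_sq_zpow_ne_zero ht ht1 fun k hk => by omega,
      qpoch_sq_zpow_ne_zero ht ht1 fun k hk => by omega,
      qpoch_sq_zpow_ne_zero ht ht1 fun k hk => by omega⟩
    simpa using qpoch_sq_zpow_ne_zero (a := 1) (m := n) ht ht1 fun k hk => by omega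
  · have hmin : mMin r₁ r₂ r₃ r₄ i j = 0 := by unfold mMin; omega
    have hmax : 0 ≤ mMax r₁ r₂ r₃ r₄ i j := by unfold mMax; omega
    simp only [F, Kfac, hmin, sum_Icc_zero_eq_sum_range hmax, mul_sum, Nat.reduceEqDiff, if_true,
      if_false, mul_one, mul_zero, add_zero]
    refine sum_congr rfl fun n hn => ?_
    have hn : (n : ℤ) ≤ mMax r₁ r₂ r₃ r₄ i j := by have := mem_range.1 hn; omega
    unfold mMax at hn
    -- the integer divisions are exact by the parity conditions in `Admissible`
    rw [show (i - r₁ - r₂) / 2 = -((r₁ + r₂ - i) / 2) by omega,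
      show (i - r₃ - r₄) / 2 = -((r₃ + r₄ - i) / 2) by omega,
      show (j - r₁ - r₄) / 2 = -((r₁ + r₄ - j) / 2) by omega,
      show (j - r₂ - r₃) / 2 = -((r₂ + r₃ - j) / 2) by omega,
      show -rho r₁ r₂ r₃ r₄ - (N - 1) = -(rho r₁ r₂ r₃ r₄ + N - 1) by ring,
      show (i + j - r₁ - r₃) / 2 + (N - 1) = (i + j - r₁ - r₃) / 2 + (N - 2) + 1 by ring,
      neg_one_zpow_sub_natCast, mul_assoc, mul_div_assoc,
      neg_one_pow_mul_qfact_div_eq_qpoch ht ht1 ?_ ?_ ?_ ?_ ?_ ?_ ?_]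
    · ring
    all_goals omega
end

section
/- (Generalized Regge symmetry, type I.) Assume (r1,r2,r3,r4,i,j,N) is admissible and r1 + r3 = r2 + r4, and set ρ′ = (r1 + r3 + i + j)/2. Then the tuples (r1, ρ′−j, r3, ρ′−i, ρ′−r4, ρ′−r2, N) and (ρ′−j, r2, ρ′−i, r4, ρ′−r3, ρ′−r1, N) are admissible and satisfy the same fusion relation (first entry plus third entry equals second plus fourth), and F_1^N(r1, r2, i; r3, r4, j) = F_1^N(r1, ρ′−j, ρ′−r4; r3, ρ′−i, ρ′−r2) = F_1^N(ρ′−j, r2, ρ′−r3; ρ′−i, r4, ρ′−r1). For N = 2 these reduce to the classical Regge symmetries of the U_q(sl_2) 6-j symbol; for N > 2 they are new non-tetrahedral symmetries of multiplicity-free U_q(sl_N) 6-j symbols. -/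
/-!
Under the fusion condition `r₁ + r₃ = r₂ + r₄` and the parity conditions, a tuple is determined by
its Regge parameters `a = ((r₁+r₂−i)/2, (r₃+r₄−i)/2, (r₁+r₄−j)/2, (r₂+r₃−j)/2)` and
`b = (i+j−r₁−r₃)/2 = (i+j−r₂−r₄)/2`: `r₁ = a₀+a₂+b`, `r₂ = a₀+a₃+b`, `r₃ = a₁+a₃+b`,
`r₄ = a₁+a₂+b`, `i = a₂+a₃+2b`, `j = a₀+a₁+2b`. Written in these parameters, each `θ_N` is
`√([x]! [y]! [z]! / [x+y+z+N−1]!)` for a triangle `(x+y, x+z, y+z)`, and both `K′` and the sum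
defining `F_1^N` become symmetric under all permutations of `a`; fusion is what makes the two
lower factorials `[(i+j−r₂−r₄)/2 + m]!` and `[(i+j−r₁−r₃)/2 + m]!` share the same `b`.
The two Regge transformations fix `b` and swap `a₀` with `a₂`, respectively `a₀` with `a₃`.
-/

open Finset

lemma zpow_sub_zpow_neg_nonneg {t : ℝ} (ht : 1 ≤ t) {n : ℤ} (hn : 0 ≤ n) : 0 ≤ t ^ n - t ^ (-n) :=
  sub_nonneg.2 (zpow_le_zpow_right₀ ht (by omega))

lemma zpow_sub_zpow_neg_nonpos {t : ℝ} (ht₀ : 0 < t) (ht : t ≤ 1) {n : ℤ} (hn : 0 ≤ n) :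
    t ^ n - t ^ (-n) ≤ 0 :=
  sub_nonpos.2 (zpow_le_zpow_right_of_le_one₀ ht₀ ht (by omega))

lemma qint_nonneg {t : ℝ} (ht : 0 < t) {n : ℤ} (hn : 0 ≤ n) : 0 ≤ qint t n := by
  have hden : t - t⁻¹ = t ^ (1 : ℤ) - t ^ (-1 : ℤ) := by simp
  rw [qint, hden]
  rcases le_total 1 t with h | h
  · exact div_nonneg (zpow_sub_zpow_neg_nonneg h hn) (zpow_sub_zpow_neg_nonneg h zero_le_one)
  · exact div_nonneg_of_nonpos (zpow_sub_zpow_neg_nonpos ht h hn)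
      (zpow_sub_zpow_neg_nonpos ht h zero_le_one)

lemma qfact_nonneg {t : ℝ} (ht : 0 < t) (n : ℤ) : 0 ≤ qfact t n :=
  Finset.prod_nonneg fun _ _ => qint_nonneg ht (by omega)

lemma theta_eq (t : ℝ) (N : ℤ) {c₁ c₂ c₃ x y z w : ℤ} (h₁ : c₁ = x + y) (h₂ : c₂ = x + z)
    (h₃ : c₃ = y + z) (hw : w = x + y + z) :
    theta t N c₁ c₂ c₃ = √(qfact t x * qfact t y * qfact t z / qfact t (w + N - 1)) := by
  subst h₁ h₂ h₃ hw
  rw [theta]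
  congr 5 <;> omega

/-- `F_1^N` of the fused tuple with Regge parameters `a`, `b` (see `F_one_eq_reggeForm`). -/
noncomputable def reggeForm (t : ℝ) (N : ℤ) (a : Fin 4 → ℤ) (b : ℤ) : ℝ :=
  let ρ := ∑ k, a k + 2 * b
  √(∏ k, qfact t (a k) * qfact t (a k + b) ^ 2 / qfact t (ρ - a k + N - 1)) *
    qfact t (N - 1) * qfact t (N - 2) *
    ∑ m ∈ Icc (max 0 (-b)) (univ.inf' univ_nonempty a),
      (-1 : ℝ) ^ (ρ - m) * qfact t (ρ + N - 1 - m) /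
        (qfact t m * (∏ k, qfact t (a k - m)) * qfact t (b + m) * qfact t (b + N - 2 + m))

lemma reggeForm_comp_perm (t : ℝ) (N : ℤ) (a : Fin 4 → ℤ) (b : ℤ) (σ : Equiv.Perm (Fin 4)) :
    reggeForm t N (a ∘ σ) b = reggeForm t N a b := by
  have hinf : univ.inf' univ_nonempty (a ∘ σ) = univ.inf' univ_nonempty a := by
    rw [← Equiv.coe_toEmbedding, inf'_comp_eq_map a univ_nonempty]
    exact inf'_congr _ (map_univ_equiv σ) fun _ _ => rfl
  have hsq : ∏ k, qfact t (a (σ k)) * qfact t (a (σ k) + b) ^ 2 /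
      qfact t (∑ i, a i + 2 * b - a (σ k) + N - 1) =
      ∏ k, qfact t (a k) * qfact t (a k + b) ^ 2 / qfact t (∑ i, a i + 2 * b - a k + N - 1) :=
    Equiv.prod_comp σ fun k => qfact t (a k) * qfact t (a k + b) ^ 2 /
      qfact t (∑ i, a i + 2 * b - a k + N - 1)
  have hden (m : ℤ) : ∏ k, qfact t (a (σ k) - m) = ∏ k, qfact t (a k - m) :=
    Equiv.prod_comp σ fun k => qfact t (a k - m)
  unfold reggeForm
  rw [hinf]
  simp only [Function.comp_apply, Equiv.sum_comp σ a, hsq, hden]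

lemma Kprime_eq_sqrt_prod {t : ℝ} (ht : 0 < t) (N : ℤ) (a : Fin 4 → ℤ) (b : ℤ) :
    Kprime t N (a 0 + a 2 + b) (a 0 + a 3 + b) (a 1 + a 3 + b) (a 1 + a 2 + b)
        (a 2 + a 3 + 2 * b) (a 0 + a 1 + 2 * b) =
      √(∏ k, qfact t (a k) * qfact t (a k + b) ^ 2 /
          qfact t (∑ k, a k + 2 * b - a k + N - 1)) * qfact t (N - 1) * qfact t (N - 2) := by
  have hq := qfact_nonneg ht
  have hθ (x y z w : ℤ) : 0 ≤ qfact t x * qfact t y * qfact t z / qfact t (w + N - 1) :=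
    div_nonneg (mul_nonneg (mul_nonneg (hq x) (hq y)) (hq z)) (hq _)
  simp only [Fin.sum_univ_four, Fin.prod_univ_four]
  rw [Kprime,
    theta_eq t N (x := a 0) (y := a 2 + b) (z := a 3 + b)
      (w := a 0 + a 1 + a 2 + a 3 + 2 * b - a 1) (by ring) (by ring) (by ring) (by ring),
    theta_eq t N (x := a 1) (y := a 3 + b) (z := a 2 + b)
      (w := a 0 + a 1 + a 2 + a 3 + 2 * b - a 0) (by ring) (by ring) (by ring) (by ring),
    theta_eq t N (x := a 2) (y := a 0 + b) (z := a 1 + b)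
      (w := a 0 + a 1 + a 2 + a 3 + 2 * b - a 3) (by ring) (by ring) (by ring) (by ring),
    theta_eq t N (x := a 3) (y := a 0 + b) (z := a 1 + b)
      (w := a 0 + a 1 + a 2 + a 3 + 2 * b - a 2) (by ring) (by ring) (by ring) (by ring),
    ← Real.sqrt_mul (hθ ..), ← Real.sqrt_mul (mul_nonneg (hθ ..) (hθ ..)),
    ← Real.sqrt_mul (mul_nonneg (mul_nonneg (hθ ..) (hθ ..)) (hθ ..))]
  congr 3
  ring

lemma F_one_eq_reggeForm {t : ℝ} (ht : 0 < t) (N : ℤ) (a : Fin 4 → ℤ) (b : ℤ) :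
    F t 1 N (a 0 + a 2 + b) (a 0 + a 3 + b) (a 2 + a 3 + 2 * b)
      (a 1 + a 3 + b) (a 1 + a 2 + b) (a 0 + a 1 + 2 * b) = reggeForm t N a b := by
  have hinf : univ.inf' univ_nonempty a = min (min (a 0) (a 1)) (min (a 2) (a 3)) := by
    simp [Fin.univ_succ, inf'_insert]
  have hmin : mMin (a 0 + a 2 + b) (a 0 + a 3 + b) (a 1 + a 3 + b) (a 1 + a 2 + b)
      (a 2 + a 3 + 2 * b) (a 0 + a 1 + 2 * b) = max 0 (-b) := by
    rw [mMin]; omega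
  have hmax : mMax (a 0 + a 2 + b) (a 0 + a 3 + b) (a 1 + a 3 + b) (a 1 + a 2 + b)
      (a 2 + a 3 + 2 * b) (a 0 + a 1 + 2 * b) = univ.inf' univ_nonempty a := by
    rw [mMax, hinf]; omega
  have hρ : rho (a 0 + a 2 + b) (a 0 + a 3 + b) (a 1 + a 3 + b) (a 1 + a 2 + b) =
      ∑ k, a k + 2 * b := by
    rw [rho, Fin.sum_univ_four]; omega
  rw [F, reggeForm, Kprime_eq_sqrt_prod ht, hmin, hmax, hρ]
  congr 1
  refine sum_congr rfl fun m _ => ?_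
  simp only [Fin.prod_univ_four, if_true, if_neg (by decide : (1 : ℕ) ≠ 2),
    mul_one, mul_zero, add_zero]
  -- every half-sum in the summand normalises to `a k * 2 / 2` or `b * 2 / 2`
  ring_nf
  simp only [Int.mul_ediv_cancel _ two_ne_zero]
  ring_nf

lemma F_one_eq_reggeForm_of_perm {t : ℝ} (ht : 0 < t) (N : ℤ) (a : Fin 4 → ℤ) (b : ℤ)
    (σ : Equiv.Perm (Fin 4)) {r₁ r₂ r₃ r₄ i j : ℤ}
    (h₁ : r₁ = a (σ 0) + a (σ 2) + b) (h₂ : r₂ = a (σ 0) + a (σ 3) + b)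
    (hi : i = a (σ 2) + a (σ 3) + 2 * b) (h₃ : r₃ = a (σ 1) + a (σ 3) + b)
    (h₄ : r₄ = a (σ 1) + a (σ 2) + b) (hj : j = a (σ 0) + a (σ 1) + 2 * b) :
    F t 1 N r₁ r₂ i r₃ r₄ j = reggeForm t N a b := by
  subst h₁ h₂ hi h₃ h₄ hj
  exact (F_one_eq_reggeForm ht N (a ∘ σ) b).trans (reggeForm_comp_perm t N a b σ)

lemma Admissible.regge {r₁ r₂ r₃ r₄ i j N : ℤ} (h : Admissible r₁ r₂ r₃ r₄ i j N)
    (hfus : r₁ + r₃ = r₂ + r₄) :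
    Admissible r₁ ((r₁ + r₃ + i + j) / 2 - j) r₃ ((r₁ + r₃ + i + j) / 2 - i)
      ((r₁ + r₃ + i + j) / 2 - r₄) ((r₁ + r₃ + i + j) / 2 - r₂) N ∧
    r₁ + r₃ = ((r₁ + r₃ + i + j) / 2 - j) + ((r₁ + r₃ + i + j) / 2 - i) ∧
    Admissible ((r₁ + r₃ + i + j) / 2 - j) r₂ ((r₁ + r₃ + i + j) / 2 - i) r₄
      ((r₁ + r₃ + i + j) / 2 - r₃) ((r₁ + r₃ + i + j) / 2 - r₁) N ∧
    ((r₁ + r₃ + i + j) / 2 - j) + ((r₁ + r₃ + i + j) / 2 - i) = r₂ + r₄ := by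
  simp only [Admissible, max_le_iff, le_min_iff, abs_le] at h ⊢
  omega

theorem stmt9_general (t : ℝ) (ht : 0 < t) (r₁ r₂ r₃ r₄ i j N : ℤ)
    (hadm : Admissible r₁ r₂ r₃ r₄ i j N) (hfus : r₁ + r₃ = r₂ + r₄) :
    Admissible r₁ ((r₁ + r₃ + i + j) / 2 - j) r₃ ((r₁ + r₃ + i + j) / 2 - i)
      ((r₁ + r₃ + i + j) / 2 - r₄) ((r₁ + r₃ + i + j) / 2 - r₂) N ∧
    r₁ + r₃ = ((r₁ + r₃ + i + j) / 2 - j) + ((r₁ + r₃ + i + j) / 2 - i) ∧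
    Admissible ((r₁ + r₃ + i + j) / 2 - j) r₂ ((r₁ + r₃ + i + j) / 2 - i) r₄
      ((r₁ + r₃ + i + j) / 2 - r₃) ((r₁ + r₃ + i + j) / 2 - r₁) N ∧
    ((r₁ + r₃ + i + j) / 2 - j) + ((r₁ + r₃ + i + j) / 2 - i) = r₂ + r₄ ∧
    F t 1 N r₁ r₂ i r₃ r₄ j =
      F t 1 N r₁ ((r₁ + r₃ + i + j) / 2 - j) ((r₁ + r₃ + i + j) / 2 - r₄)
        r₃ ((r₁ + r₃ + i + j) / 2 - i) ((r₁ + r₃ + i + j) / 2 - r₂) ∧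
    F t 1 N r₁ r₂ i r₃ r₄ j =
      F t 1 N ((r₁ + r₃ + i + j) / 2 - j) r₂ ((r₁ + r₃ + i + j) / 2 - r₃)
        ((r₁ + r₃ + i + j) / 2 - i) r₄ ((r₁ + r₃ + i + j) / 2 - r₁) := by
  obtain ⟨hA, hfusA, hB, hfusB⟩ := hadm.regge hfus
  obtain ⟨-, -, -, -, -, -, -, d₁, -, d₃, -⟩ := hadm
  set a : Fin 4 → ℤ :=
    ![(r₁ + r₂ - i) / 2, (r₃ + r₄ - i) / 2, (r₁ + r₄ - j) / 2, (r₂ + r₃ - j) / 2]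
  set b := (i + j - r₁ - r₃) / 2
  refine ⟨hA, hfusA, hB, hfusB,
    (F_one_eq_reggeForm_of_perm ht N a b 1 ?_ ?_ ?_ ?_ ?_ ?_).trans
      (F_one_eq_reggeForm_of_perm ht N a b (.swap 0 2) ?_ ?_ ?_ ?_ ?_ ?_).symm,
    (F_one_eq_reggeForm_of_perm ht N a b 1 ?_ ?_ ?_ ?_ ?_ ?_).trans
      (F_one_eq_reggeForm_of_perm ht N a b (.swap 0 3) ?_ ?_ ?_ ?_ ?_ ?_).symm⟩
  all_goals
    simp only [Equiv.Perm.coe_one, id_eq, Equiv.swap_apply_left, Equiv.swap_apply_right,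
      Equiv.swap_apply_of_ne_of_ne, ne_eq, Fin.reduceEq, one_ne_zero, not_false_eq_true,
      Matrix.cons_val, Matrix.cons_val_zero, Matrix.cons_val_one, a, b]
    omega

/-- generalized Regge symmetry, type I: with `ρ′ = (r₁+r₃+i+j)/2`,
the two Regge-transformed tuples are admissible, satisfy the type I fusion relation
(first plus third equals second plus fourth), and give the same value of `F_1^N`. -/
theorem stmt9 (t : ℝ) (ht : 0 < t) (ht1 : t ≠ 1) (r₁ r₂ r₃ r₄ i j N : ℤ)
    (hadm : Admissible r₁ r₂ r₃ r₄ i j N) (hfus : r₁ + r₃ = r₂ + r₄) :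
    Admissible r₁ ((r₁ + r₃ + i + j) / 2 - j) r₃ ((r₁ + r₃ + i + j) / 2 - i)
      ((r₁ + r₃ + i + j) / 2 - r₄) ((r₁ + r₃ + i + j) / 2 - r₂) N ∧
    r₁ + r₃ = ((r₁ + r₃ + i + j) / 2 - j) + ((r₁ + r₃ + i + j) / 2 - i) ∧
    Admissible ((r₁ + r₃ + i + j) / 2 - j) r₂ ((r₁ + r₃ + i + j) / 2 - i) r₄
      ((r₁ + r₃ + i + j) / 2 - r₃) ((r₁ + r₃ + i + j) / 2 - r₁) N ∧
    ((r₁ + r₃ + i + j) / 2 - j) + ((r₁ + r₃ + i + j) / 2 - i) = r₂ + r₄ ∧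
    F t 1 N r₁ r₂ i r₃ r₄ j =
      F t 1 N r₁ ((r₁ + r₃ + i + j) / 2 - j) ((r₁ + r₃ + i + j) / 2 - r₄)
        r₃ ((r₁ + r₃ + i + j) / 2 - i) ((r₁ + r₃ + i + j) / 2 - r₂) ∧
    F t 1 N r₁ r₂ i r₃ r₄ j =
      F t 1 N ((r₁ + r₃ + i + j) / 2 - j) r₂ ((r₁ + r₃ + i + j) / 2 - r₃)
        ((r₁ + r₃ + i + j) / 2 - i) r₄ ((r₁ + r₃ + i + j) / 2 - r₁) :=
  stmt9_general t ht r₁ r₂ r₃ r₄ i j N hadm hfus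
end

section
/- (Tetrahedral symmetries, type I.) Assume (r1,r2,r3,r4,i,j,N) is admissible. Then the tuples obtained by the permutations below are admissible and F_1^N(r1, r2, i; r3, r4, j) = F_1^N(r3, r4, i; r1, r2, j) = F_1^N(r1, r4, j; r3, r2, i) = F_1^N(r3, r2, j; r1, r4, i). (No fusion relation is needed; these are the tetrahedral symmetries that preserve the type I form of the multiplicity-free 6-j symbol.) -/
/-! Both generating symmetries are pure relabelings: they fix `ρ` and the summation range,
permute the four `θ`-factors of `K′` (up to swapping the first two arguments of `θ`), and
permute the seven q-factorials in each summand, the shift `N − 2` staying on the factor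
`(i + j − r₁ − r₃)/2 + m`. The third symmetry is their composite. -/

open Finset

theorem Admissible.swap_pairs {r₁ r₂ r₃ r₄ i j N : ℤ} (h : Admissible r₁ r₂ r₃ r₄ i j N) :
    Admissible r₃ r₄ r₁ r₂ i j N := by
  simp only [Admissible, max_le_iff, le_min_iff, abs_le] at h ⊢
  omega

theorem Admissible.swap_channels {r₁ r₂ r₃ r₄ i j N : ℤ} (h : Admissible r₁ r₂ r₃ r₄ i j N) :
    Admissible r₁ r₄ r₃ r₂ j i N := by
  simp only [Admissible, max_le_iff, le_min_iff, abs_le] at h ⊢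
  omega

theorem theta_comm (t : ℝ) (N a b c : ℤ) : theta t N b a c = theta t N a b c := by
  simp only [theta]
  ring_nf

theorem F_one_swap_pairs (t : ℝ) (N r₁ r₂ i r₃ r₄ j : ℤ) :
    F t 1 N r₁ r₂ i r₃ r₄ j = F t 1 N r₃ r₄ i r₁ r₂ j := by
  have hmin : mMin r₃ r₄ r₁ r₂ i j = mMin r₁ r₂ r₃ r₄ i j := by simp only [mMin]; omega
  have hmax : mMax r₃ r₄ r₁ r₂ i j = mMax r₁ r₂ r₃ r₄ i j := by simp only [mMax]; omega
  have hrho : rho r₃ r₄ r₁ r₂ = rho r₁ r₂ r₃ r₄ := by simp only [rho]; omega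
  simp only [F, Kprime, hmin, hmax, hrho, theta_comm t N r₃ r₂, theta_comm t N r₄ r₁,
    Int.add_comm r₄ r₁, Int.add_comm r₃ r₂, show i + j - r₄ - r₂ = i + j - r₂ - r₄ by omega,
    show i + j - r₃ - r₁ = i + j - r₁ - r₃ by omega,
    if_true, if_neg (show (1 : ℕ) ≠ 2 by decide), mul_zero, mul_one, add_zero]
  congr 1
  · ring
  · exact sum_congr rfl fun m _ ↦ by ring

theorem F_one_swap_channels (t : ℝ) (N r₁ r₂ i r₃ r₄ j : ℤ) :
    F t 1 N r₁ r₂ i r₃ r₄ j = F t 1 N r₁ r₄ j r₃ r₂ i := by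
  have hmin : mMin r₁ r₄ r₃ r₂ j i = mMin r₁ r₂ r₃ r₄ i j := by simp only [mMin]; omega
  have hmax : mMax r₁ r₄ r₃ r₂ j i = mMax r₁ r₂ r₃ r₄ i j := by simp only [mMax]; omega
  have hrho : rho r₁ r₄ r₃ r₂ = rho r₁ r₂ r₃ r₄ := by simp only [rho]; omega
  simp only [F, Kprime, hmin, hmax, hrho, theta_comm t N r₃ r₂, theta_comm t N r₄ r₃,
    Int.add_comm r₃ r₂, Int.add_comm r₄ r₃, Int.add_comm j i,
    show i + j - r₄ - r₂ = i + j - r₂ - r₄ by omega,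
    if_true, if_neg (show (1 : ℕ) ≠ 2 by decide), mul_zero, mul_one, add_zero]
  congr 1
  · ring
  · exact sum_congr rfl fun m _ ↦ by ring

theorem stmt11_general (t : ℝ) (r₁ r₂ r₃ r₄ i j N : ℤ)
    (hadm : Admissible r₁ r₂ r₃ r₄ i j N) :
    Admissible r₃ r₄ r₁ r₂ i j N ∧
    Admissible r₁ r₄ r₃ r₂ j i N ∧
    Admissible r₃ r₂ r₁ r₄ j i N ∧
    F t 1 N r₁ r₂ i r₃ r₄ j = F t 1 N r₃ r₄ i r₁ r₂ j ∧
    F t 1 N r₁ r₂ i r₃ r₄ j = F t 1 N r₁ r₄ j r₃ r₂ i ∧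
    F t 1 N r₁ r₂ i r₃ r₄ j = F t 1 N r₃ r₂ j r₁ r₄ i :=
  ⟨hadm.swap_pairs, hadm.swap_channels, hadm.swap_channels.swap_pairs,
    F_one_swap_pairs .., F_one_swap_channels ..,
    (F_one_swap_channels ..).trans (F_one_swap_pairs ..)⟩

/-- tetrahedral symmetries, type I: the permuted tuples are admissible and
`F_1^N(r₁,r₂,i;r₃,r₄,j) = F_1^N(r₃,r₄,i;r₁,r₂,j) = F_1^N(r₁,r₄,j;r₃,r₂,i) = F_1^N(r₃,r₂,j;r₁,r₄,i)`. -/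
theorem stmt11 (t : ℝ) (ht : 0 < t) (ht1 : t ≠ 1) (r₁ r₂ r₃ r₄ i j N : ℤ)
    (hadm : Admissible r₁ r₂ r₃ r₄ i j N) :
    Admissible r₃ r₄ r₁ r₂ i j N ∧
    Admissible r₁ r₄ r₃ r₂ j i N ∧
    Admissible r₃ r₂ r₁ r₄ j i N ∧
    F t 1 N r₁ r₂ i r₃ r₄ j = F t 1 N r₃ r₄ i r₁ r₂ j ∧
    F t 1 N r₁ r₂ i r₃ r₄ j = F t 1 N r₁ r₄ j r₃ r₂ i ∧
    F t 1 N r₁ r₂ i r₃ r₄ j = F t 1 N r₃ r₂ j r₁ r₄ i :=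
  stmt11_general t r₁ r₂ r₃ r₄ i j N hadm
end

section
/- Let H = { (x1, x2, x3, x4, u1, u2, u3) ∈ ℚ⁷ : x1 + x2 + x3 + x4 + 1 = u1 + u2 + u3 }. The 24 maps permuting the coordinates (x1,x2,x3,x4), the 6 maps permuting the coordinates (u1,u2,u3), and the affine involution s(x1,x2,x3,x4,u1,u2,u3) = (u3−x1, u3−x2, x3, x4, 1−u1+x3+x4, 1−u2+x3+x4, u3) all map H bijectively onto H. The subgroup of the group of bijections of H generated by (the restrictions to H of) these maps is finite of order 23040. -/
/-!
The balance condition makes `H` a copy of `ℚ⁶` through `coords`, and in these coordinates every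
generator acts as a signed permutation with an even number of sign changes. So the group embeds
into the Weyl group `W(D₆)` of even signed permutations, of order `2⁵ · 6! = 23040`. Conversely,
the permutation parts of the generators generate `S₆`, and the lifts of `(x₁ x₂)` and `(x₃ x₄)`
have the same permutation part, so their product is a double sign change. A subgroup of `W(Dₙ)`
mapping onto `Sₙ` and containing a double sign change is all of `W(Dₙ)`: conjugation moves it to
every other double sign change, and these generate all even sign vectors.
-/

namespace Stmt14

/-- The ambient space `ℚ⁴ × ℚ³` of upper and lower arguments of a `₄Φ₃` series. -/
abbrev V : Type := (Fin 4 → ℚ) × (Fin 3 → ℚ)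

/-- The balance hyperplane `x₁ + x₂ + x₃ + x₄ + 1 = u₁ + u₂ + u₃`. -/
def H : Set V := {p | (∑ a, p.1 a) + 1 = ∑ b, p.2 b}

/-- Permutation of the upper coordinates `(x₁,x₂,x₃,x₄)`. -/
def permX (σ : Equiv.Perm (Fin 4)) : V → V := fun p => (p.1 ∘ σ, p.2)

/-- Permutation of the lower coordinates `(u₁,u₂,u₃)`. -/
def permU (τ : Equiv.Perm (Fin 3)) : V → V := fun p => (p.1, p.2 ∘ τ)

/-- The affine involution `s` corresponding to Sears' transformation:
`s(x₁,x₂,x₃,x₄,u₁,u₂,u₃) = (u₃−x₁, u₃−x₂, x₃, x₄, 1−u₁+x₃+x₄, 1−u₂+x₃+x₄, u₃)`. -/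
def sears : V → V := fun p =>
  (![p.2 2 - p.1 0, p.2 2 - p.1 1, p.1 2, p.1 3],
   ![1 - p.2 0 + p.1 2 + p.1 3, 1 - p.2 1 + p.1 2 + p.1 3, p.2 2])

open Equiv SemidirectProduct

abbrev SignedPerm (ι : Type*) := (ι → ℤˣ) ⋊[mulAutArrow] Perm ι

namespace SignedPerm

variable {ι : Type*}

section Action

variable {A : Type*} [AddCommGroup A]

instance : SMul (SignedPerm ι) (ι → A) := ⟨fun w y i => w.left i • y (w.right⁻¹ i)⟩

lemma smul_apply (w : SignedPerm ι) (y : ι → A) (i : ι) :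
    (w • y) i = w.left i • y (w.right⁻¹ i) := rfl

instance : MulAction (SignedPerm ι) (ι → A) where
  one_smul y := funext fun i => by simp [smul_apply]
  mul_smul v w y := funext fun i => by
    simp only [smul_apply, mul_left, mul_right, Pi.mul_apply, mul_smul, mul_inv_rev,
      Perm.mul_apply]
    rfl

lemma _root_.Int.units_eq_one_of_smul_eq {u : ℤˣ} {a : A} (ha : -a ≠ a) (h : u • a = a) :
    u = 1 := by
  rcases Int.units_eq_one_or u with rfl | rfl
  · rfl
  · exact absurd (by simpa using h) ha

variable [DecidableEq ι]

lemma eq_one_of_forall_smul_eq {a : A} (ha : -a ≠ a) {w : SignedPerm ι}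
    (hw : ∀ y : ι → A, w • y = y) : w = 1 := by
  have ha₀ : a ≠ 0 := fun h => ha (by simp [h])
  have hsingle (j : ι) : w.left (w.right j) • a = (Pi.single j a : ι → A) (w.right j) := by
    simpa [smul_apply] using congrFun (hw (Pi.single j a)) (w.right j)
  have hright (j : ι) : w.right j = j := by
    by_contra hj
    have := hsingle j
    rw [Pi.single_eq_of_ne hj, smul_eq_zero_iff_eq] at this
    exact ha₀ this
  have hleft (j : ι) : w.left j = 1 := by
    have := hsingle j
    rw [hright, Pi.single_eq_same] at this
    exact Int.units_eq_one_of_smul_eq ha this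
  exact SemidirectProduct.ext (funext hleft) (Equiv.ext hright)

lemma toPermHom_injective {a : A} (ha : -a ≠ a) :
    Function.Injective (MulAction.toPermHom (SignedPerm ι) (ι → A)) :=
  (injective_iff_map_eq_one _).2 fun _ hw =>
    eq_one_of_forall_smul_eq ha fun y => congrArg (· y) hw

end Action

section Even

variable (ι) [Fintype ι]

def prodSigns : SignedPerm ι →* ℤˣ where
  toFun w := ∏ i, w.left i
  map_one' := Finset.prod_const_one
  map_mul' v w := by
    simp only [mul_left, Pi.mul_apply, Finset.prod_mul_distrib, mulAutArrow_apply_apply]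
    congr 1
    exact Equiv.prod_comp v.right⁻¹ w.left

def evenSignedPerm : Subgroup (SignedPerm ι) := (prodSigns ι).ker

variable {ι}

lemma prodSigns_inl (ε : ι → ℤˣ) : prodSigns ι (inl ε) = ∏ i, ε i := rfl

variable [DecidableEq ι]

lemma prodSigns_surjective [Nonempty ι] : Function.Surjective (prodSigns ι) := by
  intro u
  obtain ⟨i⟩ := ‹Nonempty ι›
  exact ⟨inl (Pi.mulSingle i u), by simp [prodSigns_inl]⟩

lemma card_evenSignedPerm [Nonempty ι] :
    Nat.card (evenSignedPerm ι) * 2 = 2 ^ Fintype.card ι * (Fintype.card ι).factorial := by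
  have hindex : (evenSignedPerm ι).index = 2 := by
    rw [evenSignedPerm, Subgroup.index_ker, MonoidHom.range_eq_top.2 prodSigns_surjective,
      Subgroup.card_top, Nat.card_eq_fintype_card, Fintype.card_units_int]
  calc Nat.card (evenSignedPerm ι) * 2
      = Nat.card (evenSignedPerm ι) * (evenSignedPerm ι).index := by rw [hindex]
    _ = Nat.card (ι → ℤˣ) * Nat.card (Perm ι) := by
      rw [Subgroup.card_mul_index, SemidirectProduct.card]
    _ = 2 ^ Fintype.card ι * (Fintype.card ι).factorial := by
      simp [Nat.card_eq_fintype_card, Fintype.card_units_int, Fintype.card_perm]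

end Even

section Generation

lemma _root_.SemidirectProduct.mul_inl_mul_inv {N G : Type*} [CommGroup N] [Group G]
    {φ : G →* MulAut N} (w : N ⋊[φ] G) (n : N) : w * inl n * w⁻¹ = inl (φ w.right n) := by
  ext <;> simp [mul_comm]

variable [DecidableEq ι]

def flipPair (i j : ι) : ι → ℤˣ := Pi.mulSingle i (-1) * Pi.mulSingle j (-1)

variable (C : Subgroup (SignedPerm ι)) {i : ι}

lemma flipPair_mem (hC : C.map rightHom = ⊤) {j : ι} (hij : i ≠ j)
    (hpair : inl (flipPair i j) ∈ C) (k : ι) : inl (flipPair i k) ∈ C := by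
  obtain rfl | hik := eq_or_ne i k
  · simp [flipPair, ← Pi.mulSingle_mul]
  obtain ⟨w, hw, hwk⟩ : swap j k ∈ C.map rightHom := hC ▸ Subgroup.mem_top _
  have hconj : mulAutArrow (swap j k) (flipPair i j) = flipPair i k := by
    ext1 a
    change flipPair i j ((swap j k)⁻¹ a) = flipPair i k a
    simp only [swap_inv, flipPair, Pi.mul_apply, Pi.mulSingle_apply, swap_apply_eq_iff,
      swap_apply_of_ne_of_ne hij hik, swap_apply_left]
  have := mul_mem (mul_mem hw hpair) (inv_mem hw)
  rwa [mul_inl_mul_inv, ← rightHom_eq_right, hwk, hconj] at this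

variable [Fintype ι]

lemma inl_mem_of_flipPair_mem (h : ∀ k, inl (flipPair i k) ∈ C) {ε : ι → ℤˣ}
    (hε : ∏ k, ε k = 1) : inl ε ∈ C := by
  have hprod : ε = ∏ k, (Pi.mulSingle i (ε k) * Pi.mulSingle k (ε k)) := by
    have := map_prod (MonoidHom.mulSingle (fun _ => ℤˣ) i) ε Finset.univ
    simp only [MonoidHom.mulSingle_apply, hε, Pi.mulSingle_one] at this
    rw [Finset.prod_mul_distrib, Finset.univ_prod_mulSingle, ← this, one_mul]
  change ε ∈ C.comap inl
  rw [hprod]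
  refine prod_mem fun k _ => ?_
  rcases Int.units_eq_one_or (ε k) with hk | hk <;> rw [hk]
  · simp
  · exact h k

theorem eq_evenSignedPerm (hCD : C ≤ evenSignedPerm ι) (hC : C.map rightHom = ⊤) {j : ι}
    (hij : i ≠ j) (hpair : inl (flipPair i j) ∈ C) : C = evenSignedPerm ι := by
  refine le_antisymm hCD fun w hw => ?_
  obtain ⟨w', hw'C, hw'⟩ : w.right ∈ C.map rightHom := hC ▸ Subgroup.mem_top _
  have hdiff : w * w'⁻¹ = inl (w * w'⁻¹).left := by
    ext1
    · rfl
    · simp [← hw', rightHom_eq_right]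
  have hmem : inl (w * w'⁻¹).left ∈ C := by
    refine inl_mem_of_flipPair_mem C (flipPair_mem C hC hij hpair) ?_
    rw [← prodSigns_inl, ← hdiff]
    exact mul_mem hw (inv_mem (hCD hw'C))
  rw [← hdiff] at hmem
  simpa using mul_mem hmem hw'C

end Generation

end SignedPerm

lemma _root_.Equiv.Perm.closure_swap_castSucc_succ (n : ℕ) :
    Subgroup.closure (Set.range fun i : Fin n => swap i.castSucc i.succ) = ⊤ :=
  Subgroup.closure_eq_top_of_mclosure_eq_top (Perm.mclosure_swap_castSucc_succ n)

lemma _root_.MonoidHom.range_le_of_closure_eq_top {G G' : Type*} [Group G] [Group G']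
    (f : G →* G') {s : Set G} (hs : Subgroup.closure s = ⊤) {M : Subgroup G'}
    (h : ∀ g ∈ s, f g ∈ M) : f.range ≤ M := by
  rw [MonoidHom.range_eq_map, ← hs, Subgroup.map_le_iff_le_comap, Subgroup.closure_le]
  exact h

lemma mem_H_iff (p : V) :
    p ∈ H ↔ p.1 0 + p.1 1 + p.1 2 + p.1 3 + 1 = p.2 0 + p.2 1 + p.2 2 := by
  simp [H, Fin.sum_univ_four, Fin.sum_univ_three]

/-- Half the difference of the two pair sums, over the three splittings of `{x₁, x₂, x₃, x₄}`
and of `{u₁, u₂, u₃, 1}` into two pairs. -/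
def coords (p : V) : Fin 6 → ℚ :=
  ![(p.1 0 + p.1 1 - p.1 2 - p.1 3) / 2,
    (p.1 0 - p.1 1 + p.1 2 - p.1 3) / 2,
    (p.1 0 - p.1 1 - p.1 2 + p.1 3) / 2,
    (-p.2 0 - p.2 1 + p.2 2 + 1) / 2,
    (-p.2 0 + p.2 1 + p.2 2 - 1) / 2,
    (p.2 0 - p.2 1 + p.2 2 - 1) / 2]

def ofCoords (y : Fin 6 → ℚ) : V :=
  (![(y 0 + y 1 + y 2 - y 3 + y 4 + y 5 + 1) / 2,
     (y 0 - y 1 - y 2 - y 3 + y 4 + y 5 + 1) / 2,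
     (-y 0 + y 1 - y 2 - y 3 + y 4 + y 5 + 1) / 2,
     (-y 0 - y 1 + y 2 - y 3 + y 4 + y 5 + 1) / 2],
   ![y 5 - y 3 + 1, y 4 - y 3 + 1, y 4 + y 5 + 1])

lemma ofCoords_mem (y : Fin 6 → ℚ) : ofCoords y ∈ H := by
  rw [mem_H_iff]
  simp [ofCoords]
  ring

def coordsEquiv : H ≃ (Fin 6 → ℚ) where
  toFun p := coords p
  invFun y := ⟨ofCoords y, ofCoords_mem y⟩
  left_inv := by
    rintro ⟨⟨x, u⟩, hp⟩
    rw [mem_H_iff] at hp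
    ext i <;> fin_cases i <;> simp [coords, ofCoords] <;> linarith
  right_inv y := by
    ext i; fin_cases i <;> simp [coords, ofCoords] <;> ring

lemma permX_mapsTo (σ : Perm (Fin 4)) : Set.MapsTo (permX σ) H H := fun p hp => by
  simpa [H, permX, Equiv.sum_comp σ p.1] using hp

lemma permU_mapsTo (τ : Perm (Fin 3)) : Set.MapsTo (permU τ) H H := fun p hp => by
  simpa [H, permU, Equiv.sum_comp τ p.2] using hp

lemma sears_mapsTo : Set.MapsTo sears H H := fun p hp => by
  rw [mem_H_iff] at hp ⊢
  simp [sears]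
  linarith

lemma sears_involutive : Function.Involutive sears := fun p => by
  ext i <;> fin_cases i <;> simp [sears] <;> ring

lemma permX_permX (σ τ : Perm (Fin 4)) (p : V) : permX σ (permX τ p) = permX (τ * σ) p := rfl

lemma permU_permU (σ τ : Perm (Fin 3)) (p : V) : permU σ (permU τ p) = permU (τ * σ) p := rfl

lemma bijOn_permX (σ : Perm (Fin 4)) : Set.BijOn (permX σ) H H :=
  Set.InvOn.bijOn (f' := permX σ⁻¹) ⟨fun p _ => by rw [permX_permX, mul_inv_cancel]; rfl,
    fun p _ => by rw [permX_permX, inv_mul_cancel]; rfl⟩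
    (permX_mapsTo σ) (permX_mapsTo σ⁻¹)

lemma bijOn_permU (τ : Perm (Fin 3)) : Set.BijOn (permU τ) H H :=
  Set.InvOn.bijOn (f' := permU τ⁻¹) ⟨fun p _ => by rw [permU_permU, mul_inv_cancel]; rfl,
    fun p _ => by rw [permU_permU, inv_mul_cancel]; rfl⟩
    (permU_mapsTo τ) (permU_mapsTo τ⁻¹)

lemma bijOn_sears : Set.BijOn sears H H :=
  Set.InvOn.bijOn ⟨fun p _ => sears_involutive p, fun p _ => sears_involutive p⟩
    sears_mapsTo sears_mapsTo

noncomputable def permXHom : Perm (Fin 4) →* Perm H where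
  toFun σ := (bijOn_permX σ⁻¹).equiv _
  map_one' := Equiv.ext fun _ => rfl
  map_mul' σ τ := Equiv.ext fun p => Subtype.ext <| by
    change permX (σ * τ)⁻¹ p = permX σ⁻¹ (permX τ⁻¹ p)
    rw [permX_permX, mul_inv_rev]

noncomputable def permUHom : Perm (Fin 3) →* Perm H where
  toFun τ := (bijOn_permU τ⁻¹).equiv _
  map_one' := Equiv.ext fun _ => rfl
  map_mul' σ τ := Equiv.ext fun p => Subtype.ext <| by
    change permU (σ * τ)⁻¹ p = permU σ⁻¹ (permU τ⁻¹ p)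
    rw [permU_permU, mul_inv_rev]

noncomputable def searsPerm : Perm H := bijOn_sears.equiv _

noncomputable def toPermH : SignedPerm (Fin 6) →* Perm H :=
  coordsEquiv.symm.permCongrHom.toMonoidHom.comp (MulAction.toPermHom _ _)

lemma toPermH_injective : Function.Injective toPermH :=
  coordsEquiv.symm.permCongrHom.injective.comp
    (SignedPerm.toPermHom_injective (a := (1 : ℚ)) (by norm_num))

lemma toPermH_eq {w : SignedPerm (Fin 6)} {F : Perm H}
    (h : ∀ p : H, coords (F p) = w • coords p) : toPermH w = F := by
  ext1 p
  apply coordsEquiv.injective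
  change coordsEquiv (coordsEquiv.symm (w • coordsEquiv p)) = coords (F p)
  rw [Equiv.apply_symm_apply, h]
  rfl

def liftX01 : SignedPerm (Fin 6) := ⟨![1, -1, -1, 1, 1, 1], swap 1 2⟩
def liftX12 : SignedPerm (Fin 6) := ⟨1, swap 0 1⟩
def liftX23 : SignedPerm (Fin 6) := ⟨1, swap 1 2⟩
def liftU01 : SignedPerm (Fin 6) := ⟨1, swap 4 5⟩
def liftU12 : SignedPerm (Fin 6) := ⟨![1, 1, 1, -1, 1, -1], swap 3 5⟩
def liftSears : SignedPerm (Fin 6) := ⟨![1, -1, -1, 1, 1, 1], swap 0 3 * swap 1 2 * swap 4 5⟩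

@[simp] lemma coe_permXHom_apply (σ : Perm (Fin 4)) (p : H) :
    (permXHom σ p : V) = permX σ⁻¹ p := rfl

@[simp] lemma coe_permUHom_apply (τ : Perm (Fin 3)) (p : H) :
    (permUHom τ p : V) = permU τ⁻¹ p := rfl

@[simp] lemma coe_searsPerm_apply (p : H) : (searsPerm p : V) = sears p := rfl

lemma toPermH_liftX01 : toPermH liftX01 = permXHom (swap 0 1) :=
  toPermH_eq fun p => by
    ext i
    fin_cases i <;> simp [coords, permX, liftX01, SignedPerm.smul_apply, swap_apply_def] <;>
      ring

lemma toPermH_liftX12 : toPermH liftX12 = permXHom (swap 1 2) :=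
  toPermH_eq fun p => by
    ext i
    fin_cases i <;> simp [coords, permX, liftX12, SignedPerm.smul_apply, swap_apply_def] <;>
      ring

lemma toPermH_liftX23 : toPermH liftX23 = permXHom (swap 2 3) :=
  toPermH_eq fun p => by
    ext i
    fin_cases i <;> simp [coords, permX, liftX23, SignedPerm.smul_apply, swap_apply_def] <;>
      ring

lemma toPermH_liftU01 : toPermH liftU01 = permUHom (swap 0 1) :=
  toPermH_eq fun p => by
    ext i
    fin_cases i <;> simp [coords, permU, liftU01, SignedPerm.smul_apply, swap_apply_def] <;>
      ring

lemma toPermH_liftU12 : toPermH liftU12 = permUHom (swap 1 2) :=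
  toPermH_eq fun p => by
    ext i
    fin_cases i <;> simp [coords, permU, liftU12, SignedPerm.smul_apply, swap_apply_def] <;>
      ring

lemma toPermH_liftSears : toPermH liftSears = searsPerm :=
  toPermH_eq fun ⟨p, hp⟩ => by
    rw [mem_H_iff] at hp
    ext i
    fin_cases i <;> simp [coords, sears, liftSears, SignedPerm.smul_apply, swap_apply_def] <;>
      linarith

lemma liftX01_mul_liftX23 : liftX01 * liftX23 = inl (SignedPerm.flipPair 1 2) := by
  ext1 <;> decide

noncomputable def searsGroup : Subgroup (Perm H) :=
  Subgroup.closure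
    (Set.range (fun σ => permXHom σ⁻¹) ∪ Set.range (fun τ => permUHom τ⁻¹) ∪ {searsPerm})

lemma permXHom_mem_searsGroup (σ : Perm (Fin 4)) : permXHom σ ∈ searsGroup :=
  Subgroup.subset_closure (Or.inl (Or.inl ⟨σ⁻¹, congrArg permXHom (inv_inv σ)⟩))

lemma permUHom_mem_searsGroup (τ : Perm (Fin 3)) : permUHom τ ∈ searsGroup :=
  Subgroup.subset_closure (Or.inl (Or.inr ⟨τ⁻¹, congrArg permUHom (inv_inv τ)⟩))

lemma searsPerm_mem_searsGroup : searsPerm ∈ searsGroup :=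
  Subgroup.subset_closure (Or.inr rfl)

open SignedPerm in
lemma searsGroup_le : searsGroup ≤ (evenSignedPerm (Fin 6)).map toPermH := by
  have lift_mem {w : SignedPerm (Fin 6)} (hw : ∏ i, w.left i = 1) :
      toPermH w ∈ (evenSignedPerm (Fin 6)).map toPermH :=
    Subgroup.mem_map_of_mem _ hw
  have hX : permXHom.range ≤ (evenSignedPerm (Fin 6)).map toPermH := by
    refine permXHom.range_le_of_closure_eq_top (Perm.closure_swap_castSucc_succ 3) ?_
    rintro _ ⟨i, rfl⟩
    fin_cases i
    exacts [toPermH_liftX01 ▸ lift_mem (by decide), toPermH_liftX12 ▸ lift_mem (by decide),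
      toPermH_liftX23 ▸ lift_mem (by decide)]
  have hU : permUHom.range ≤ (evenSignedPerm (Fin 6)).map toPermH := by
    refine permUHom.range_le_of_closure_eq_top (Perm.closure_swap_castSucc_succ 2) ?_
    rintro _ ⟨i, rfl⟩
    fin_cases i
    exacts [toPermH_liftU01 ▸ lift_mem (by decide), toPermH_liftU12 ▸ lift_mem (by decide)]
  rw [searsGroup, Subgroup.closure_le]
  rintro _ ((⟨σ, rfl⟩ | ⟨τ, rfl⟩) | rfl)
  · exact hX ⟨σ⁻¹, rfl⟩
  · exact hU ⟨τ⁻¹, rfl⟩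
  · exact toPermH_liftSears ▸ lift_mem (by decide)

open SignedPerm in
lemma map_le_searsGroup : (evenSignedPerm (Fin 6)).map toPermH ≤ searsGroup := by
  set C := searsGroup.comap toPermH
  have hCD : C ≤ evenSignedPerm (Fin 6) :=
    (Subgroup.comap_mono searsGroup_le).trans
      (Subgroup.comap_map_eq_self_of_injective toPermH_injective _).le
  have hX01 : liftX01 ∈ C := Subgroup.mem_comap.2 (toPermH_liftX01 ▸ permXHom_mem_searsGroup _)
  have hX12 : liftX12 ∈ C := Subgroup.mem_comap.2 (toPermH_liftX12 ▸ permXHom_mem_searsGroup _)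
  have hX23 : liftX23 ∈ C := Subgroup.mem_comap.2 (toPermH_liftX23 ▸ permXHom_mem_searsGroup _)
  have hU01 : liftU01 ∈ C := Subgroup.mem_comap.2 (toPermH_liftU01 ▸ permUHom_mem_searsGroup _)
  have hU12 : liftU12 ∈ C := Subgroup.mem_comap.2 (toPermH_liftU12 ▸ permUHom_mem_searsGroup _)
  have hS : liftSears ∈ C := Subgroup.mem_comap.2 (toPermH_liftSears ▸ searsPerm_mem_searsGroup)
  have hC : C.map rightHom = ⊤ := by
    refine eq_top_iff.2 ((Perm.closure_swap_castSucc_succ 5).symm.le.trans ?_)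
    rw [Subgroup.closure_le]
    rintro _ ⟨i, rfl⟩
    fin_cases i
    exacts [⟨liftX12, hX12, rfl⟩, ⟨liftX23, hX23, rfl⟩,
      ⟨liftSears * liftX12 * liftSears, mul_mem (mul_mem hS hX12) hS, by decide⟩,
      ⟨liftU12 * liftU01 * liftU12, mul_mem (mul_mem hU12 hU01) hU12, by decide⟩,
      ⟨liftU01, hU01, rfl⟩]
  have hpair : inl (flipPair 1 2) ∈ C := liftX01_mul_liftX23 ▸ mul_mem hX01 hX23
  rw [← eq_evenSignedPerm C hCD hC (by decide) hpair]
  exact Subgroup.map_comap_le _ _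

lemma card_searsGroup : Nat.card searsGroup = 23040 := by
  rw [le_antisymm searsGroup_le map_le_searsGroup,
    Subgroup.card_map_of_injective toPermH_injective]
  have := SignedPerm.card_evenSignedPerm (ι := Fin 6)
  simp only [Fintype.card_fin, Nat.factorial] at this
  omega

/-- the coordinate permutations and Sears' involution map `H` bijectively
onto `H`, and the subgroup of the group of bijections of `H` generated by their restrictions
to `H` is finite of order 23040. -/
theorem stmt14 :
    (∀ σ : Equiv.Perm (Fin 4), Set.BijOn (permX σ) H H) ∧
    (∀ τ : Equiv.Perm (Fin 3), Set.BijOn (permU τ) H H) ∧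
    Set.BijOn sears H H ∧
    ∃ (a : Equiv.Perm (Fin 4) → Equiv.Perm ↥H) (b : Equiv.Perm (Fin 3) → Equiv.Perm ↥H)
      (c : Equiv.Perm ↥H),
      (∀ σ (p : ↥H), ((a σ p : ↥H) : V) = permX σ (p : V)) ∧
      (∀ τ (p : ↥H), ((b τ p : ↥H) : V) = permU τ (p : V)) ∧
      (∀ p : ↥H, ((c p : ↥H) : V) = sears (p : V)) ∧
      Nat.card
        (Subgroup.closure (Set.range a ∪ Set.range b ∪ {c}) : Subgroup (Equiv.Perm ↥H)) =
        23040 :=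
  ⟨bijOn_permX, bijOn_permU, bijOn_sears, fun σ => permXHom σ⁻¹, fun τ => permUHom τ⁻¹,
    searsPerm, fun σ p => congrArg (permX · p) (inv_inv σ),
    fun τ p => congrArg (permU · p) (inv_inv τ), fun _ => rfl, card_searsGroup⟩

end Stmt14
end

section
/- (External symmetry of type I in the rank-preserving case.) Assume (r1,r2,r3,r4,i,j,N) is admissible, r1 + r3 = r2 + r4, and i + j = r2 + r4. Then the tuple (r1, i, r3, j, r2, r4, N), obtained by exchanging r2 ↔ i and r4 ↔ j, is admissible, satisfies r1 + r3 = i + j and r2 + r4 = i + j, and K_1(r1, i, r3, j, r2, r4; N) · F_1^N(r1, r2, i; r3, r4, j) = K_1(r1, r2, r3, r4, i, j; N) · F_1^N(r1, i, r2; r3, j, r4), where K_1(· ; N) denotes the factor K_1 evaluated at the indicated parameter tuple (both sides are well defined since m_min = 0 for both tuples). This is the M = N case of the first external symmetry of type I from the paper, a relation not generated by tetrahedral and Regge symmetries. -/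
open Finset

/-! Under `i + j = r₂ + r₄` the exchange `r₂ ↔ i`, `r₄ ↔ j` leaves `ρ` and the summation range
unchanged and only permutes the half-sums entering the factorials of `F_1` and `K_1`; in type 1
the shift by `N − 2` sits on `(i + j − r₁ − r₃)/2`, which is itself invariant (in type 2 it would
move from `(r₁ + r₂ − i)/2` to `(r₁ + r₄ − j)/2`). The four triangles `(r₁,r₂,i)`, `(r₃,r₄,i)`,
`(r₁,r₄,j)`, `(r₂,r₃,j)` of admissibility are likewise only permuted. So the two tuples differ
only in their `K′` prefactors, which cancel crosswise. -/

noncomputable def Fsum (t : ℝ) (T : ℕ) (N r₁ r₂ i r₃ r₄ j : ℤ) : ℝ :=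
  ∑ m ∈ Finset.Icc (mMin r₁ r₂ r₃ r₄ i j) (mMax r₁ r₂ r₃ r₄ i j),
    (-1 : ℝ) ^ (rho r₁ r₂ r₃ r₄ - m) * qfact t (rho r₁ r₂ r₃ r₄ + N - 1 - m) /
      (qfact t m * qfact t ((r₃ + r₄ - i) / 2 - m) * qfact t ((r₂ + r₃ - j) / 2 - m) *
        qfact t ((r₁ + r₄ - j) / 2 - m) * qfact t ((i + j - r₂ - r₄) / 2 + m) *
        qfact t ((r₁ + r₂ - i) / 2 + (N - 2) * (if T = 2 then 1 else 0) - m) *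
        qfact t ((i + j - r₁ - r₃) / 2 + (N - 2) * (if T = 1 then 1 else 0) + m))

noncomputable def Kquot (t : ℝ) (T : ℕ) (N r₁ r₂ i r₃ r₄ j : ℤ) : ℝ :=
  qfact t (rho r₁ r₂ r₃ r₄ + N - 1) /
    (qfact t ((r₃ + r₄ - i) / 2) *
      qfact t ((r₁ + r₂ - i) / 2 + (N - 2) * (if T = 2 then 1 else 0)) *
      qfact t ((r₂ + r₃ - j) / 2) * qfact t ((r₁ + r₄ - j) / 2) *
      qfact t ((i + j - r₂ - r₄) / 2) *
      qfact t ((i + j - r₁ - r₃) / 2 + (N - 2) * (if T = 1 then 1 else 0)))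

theorem Admissible.swap {r₁ r₂ r₃ r₄ i j N : ℤ} (h : Admissible r₁ r₂ r₃ r₄ i j N) :
    Admissible r₁ i r₃ j r₂ r₄ N := by
  simp only [Admissible, max_le_iff, le_min_iff, abs_le] at h ⊢
  omega

section Swap

variable (t : ℝ) (N : ℤ) {r₁ r₂ r₃ r₄ i j : ℤ}

theorem F_eq_Kprime_mul_Fsum (T : ℕ) :
    F t T N r₁ r₂ i r₃ r₄ j = Kprime t N r₁ r₂ r₃ r₄ i j * Fsum t T N r₁ r₂ i r₃ r₄ j :=
  rfl

theorem Kfac_eq_Kprime_mul_Kquot (T : ℕ) :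
    Kfac t T N r₁ r₂ i r₃ r₄ j = Kprime t N r₁ r₂ r₃ r₄ i j * Kquot t T N r₁ r₂ i r₃ r₄ j :=
  mul_div_assoc _ _ _

theorem rho_swap (hij : i + j = r₂ + r₄) : rho r₁ i r₃ j = rho r₁ r₂ r₃ r₄ := by
  unfold rho; omega

theorem Fsum_swap (hij : i + j = r₂ + r₄) :
    Fsum t 1 N r₁ i r₂ r₃ j r₄ = Fsum t 1 N r₁ r₂ i r₃ r₄ j := by
  have hmin : mMin r₁ i r₃ j r₂ r₄ = mMin r₁ r₂ r₃ r₄ i j := by unfold mMin; omega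
  have hmax : mMax r₁ i r₃ j r₂ r₄ = mMax r₁ r₂ r₃ r₄ i j := by unfold mMax; omega
  simp only [Fsum, if_neg (show (1 : ℕ) ≠ 2 by decide), mul_zero, add_zero]
  rw [rho_swap hij, hmin, hmax, show r₃ + j - r₂ = r₃ + r₄ - i by omega,
    show i + r₃ - r₄ = r₂ + r₃ - j by omega, show r₁ + j - r₄ = r₁ + r₂ - i by omega,
    show r₂ + r₄ - i - j = i + j - r₂ - r₄ by omega, show r₁ + i - r₂ = r₁ + r₄ - j by omega,
    show r₂ + r₄ - r₁ - r₃ = i + j - r₁ - r₃ by omega]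
  refine Finset.sum_congr rfl fun m _ => ?_
  ring

theorem Kquot_swap (hij : i + j = r₂ + r₄) :
    Kquot t 1 N r₁ i r₂ r₃ j r₄ = Kquot t 1 N r₁ r₂ i r₃ r₄ j := by
  simp only [Kquot, if_neg (show (1 : ℕ) ≠ 2 by decide), mul_zero, add_zero]
  rw [rho_swap hij, show r₃ + j - r₂ = r₃ + r₄ - i by omega,
    show i + r₃ - r₄ = r₂ + r₃ - j by omega, show r₁ + j - r₄ = r₁ + r₂ - i by omega,
    show r₂ + r₄ - i - j = i + j - r₂ - r₄ by omega, show r₁ + i - r₂ = r₁ + r₄ - j by omega,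
    show r₂ + r₄ - r₁ - r₃ = i + j - r₁ - r₃ by omega]
  ring

theorem Kfac_mul_F_swap (hij : i + j = r₂ + r₄) :
    Kfac t 1 N r₁ i r₂ r₃ j r₄ * F t 1 N r₁ r₂ i r₃ r₄ j =
      Kfac t 1 N r₁ r₂ i r₃ r₄ j * F t 1 N r₁ i r₂ r₃ j r₄ := by
  simp only [Kfac_eq_Kprime_mul_Kquot, F_eq_Kprime_mul_Fsum, Fsum_swap t N hij,
    Kquot_swap t N hij]
  ring

end Swap

theorem stmt19_general (t : ℝ) (r₁ r₂ r₃ r₄ i j N : ℤ)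
    (hadm : Admissible r₁ r₂ r₃ r₄ i j N)
    (hfus : r₁ + r₃ = r₂ + r₄) (hij : i + j = r₂ + r₄) :
    Admissible r₁ i r₃ j r₂ r₄ N ∧
    r₁ + r₃ = i + j ∧
    r₂ + r₄ = i + j ∧
    Kfac t 1 N r₁ i r₂ r₃ j r₄ * F t 1 N r₁ r₂ i r₃ r₄ j =
      Kfac t 1 N r₁ r₂ i r₃ r₄ j * F t 1 N r₁ i r₂ r₃ j r₄ :=
  ⟨hadm.swap, by omega, by omega, Kfac_mul_F_swap t N hij⟩

/-- external symmetry of type I in the rank-preserving case: if the tuple is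
admissible with `r₁ + r₃ = r₂ + r₄` and `i + j = r₂ + r₄`, then the tuple obtained by
exchanging `r₂ ↔ i` and `r₄ ↔ j` is admissible, satisfies the indicated fusion relations, and
`K₁(r₁,i,r₃,j,r₂,r₄;N) · F_1^N(r₁,r₂,i;r₃,r₄,j) = K₁(r₁,r₂,r₃,r₄,i,j;N) · F_1^N(r₁,i,r₂;r₃,j,r₄)`. -/
theorem stmt19 (t : ℝ) (ht : 0 < t) (ht1 : t ≠ 1) (r₁ r₂ r₃ r₄ i j N : ℤ)
    (hadm : Admissible r₁ r₂ r₃ r₄ i j N)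
    (hfus : r₁ + r₃ = r₂ + r₄) (hij : i + j = r₂ + r₄) :
    Admissible r₁ i r₃ j r₂ r₄ N ∧
    r₁ + r₃ = i + j ∧
    r₂ + r₄ = i + j ∧
    Kfac t 1 N r₁ i r₂ r₃ j r₄ * F t 1 N r₁ r₂ i r₃ r₄ j =
      Kfac t 1 N r₁ r₂ i r₃ r₄ j * F t 1 N r₁ i r₂ r₃ j r₄ :=
  stmt19_general t r₁ r₂ r₃ r₄ i j N hadm hfus hij
end
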